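/- arXiv:1311.0030 — 4 statements merged into one kernel-verified Lean document; each statement's English description precedes it below -/
import Mathlib

section
/- Suppose R is a ring with identity and P is a separating family of central idempotents (i.e., for each nonzero x ∈ R there is p ∈ P with px ≠ 0) such that for each p ∈ P every local derivation on the corner ring pR is a derivation. Then every local derivation on R is a derivation. -/
/-- An additive map satisfying the Leibniz rule. -/
def IsDeriv {R : Type*} [Ring R] (δ : R → R) : Prop :=
  (∀ a b : R, δ (a + b) = δ a + δ b) ∧ (∀ a b : R, δ (a * b) = δ a * b + a * δ b)

/-- An additive map agreeing at each point with some derivation. -/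
def IsLocalDeriv {R : Type*} [Ring R] (δ : R → R) : Prop :=
  (∀ a b : R, δ (a + b) = δ a + δ b) ∧ ∀ x : R, ∃ ρ : R → R, IsDeriv ρ ∧ δ x = ρ x

/-- A derivation of the subset `S` (e.g. a corner `pR`) of `R`: maps `S` into `S`,
additive and Leibniz on `S`. -/
def IsDerivOn {R : Type*} [Ring R] (S : Set R) (ρ : R → R) : Prop :=
  (∀ x ∈ S, ρ x ∈ S) ∧ (∀ x ∈ S, ∀ y ∈ S, ρ (x + y) = ρ x + ρ y) ∧
    (∀ x ∈ S, ∀ y ∈ S, ρ (x * y) = ρ x * y + x * ρ y)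

/-- A local derivation of the subset `S` of `R`. -/
def IsLocalDerivOn {R : Type*} [Ring R] (S : Set R) (δ : R → R) : Prop :=
  (∀ x ∈ S, δ x ∈ S) ∧ (∀ x ∈ S, ∀ y ∈ S, δ (x + y) = δ x + δ y) ∧
    ∀ x ∈ S, ∃ ρ : R → R, IsDerivOn S ρ ∧ δ x = ρ x

/-- The corner set `pR`. -/
def corner {R : Type*} [Ring R] (p : R) : Set R := Set.range (fun r => p * r)


/-!
Write `δ_p y = p * δ y`. For a derivation `ρ`, the Leibniz rule at `p = p * p` gives `p * ρ p = 0`,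
hence `p * ρ (x - p * x) = 0`; a local derivation inherits this pointwise, so `δ_p (p * x) = δ_p x`.
Moreover `δ_p` is a local derivation of the corner `pR`, since it agrees at each point with the
derivation `y ↦ p * ρ y` of `pR`. By hypothesis it is then a derivation of `pR`, and evaluating its
Leibniz rule at `p * a`, `p * b` shows that `p` kills `δ (a * b) - (δ a * b + a * δ b)`. As the
family is separating, this defect vanishes.
-/

section CentralIdempotent

variable {R : Type*} [Ring R] {p : R}

lemma mul_mul_mul_eq_mul_of_central_idem (hp : p * p = p) (hc : ∀ r : R, p * r = r * p)
    (u v : R) : (p * u) * (p * v) = p * (u * v) := by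
  rw [mul_assoc, ← mul_assoc u, ← hc u, ← mul_assoc, ← mul_assoc, hp, mul_assoc]

lemma IsDeriv.mul_map_idem_eq_zero {ρ : R → R} (hρ : IsDeriv ρ) (hp : p * p = p)
    (hc : ∀ r : R, p * r = r * p) : p * ρ p = 0 := by
  have h := congrArg (p * ·) (hρ.2 p p)
  simp only [hp, mul_add, ← hc (ρ p), ← mul_assoc] at h
  simpa using h

lemma IsDeriv.mul_map_mul_left {ρ : R → R} (hρ : IsDeriv ρ) (hp : p * p = p)
    (hc : ∀ r : R, p * r = r * p) (x : R) : p * ρ (p * x) = p * ρ x := by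
  rw [hρ.2, mul_add, ← mul_assoc, ← mul_assoc, hp, hρ.mul_map_idem_eq_zero hp hc, zero_mul,
    zero_add]

lemma IsDeriv.mul_map_sub_mul_eq_zero {ρ : R → R} (hρ : IsDeriv ρ) (hp : p * p = p)
    (hc : ∀ r : R, p * r = r * p) (x : R) : p * ρ (x - p * x) = 0 := by
  have hsub : ρ (x - p * x) = ρ x - ρ (p * x) := (AddMonoidHom.mk' ρ hρ.1).map_sub x (p * x)
  rw [hsub, mul_sub]
  exact sub_eq_zero.mpr (hρ.mul_map_mul_left hp hc x).symm

lemma IsDeriv.isDerivOn_corner {ρ : R → R} (hρ : IsDeriv ρ) (hp : p * p = p)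
    (hc : ∀ r : R, p * r = r * p) : IsDerivOn (corner p) (fun y => p * ρ y) := by
  refine ⟨fun x _ => ⟨ρ x, rfl⟩, fun x _ y _ => by simp only [hρ.1, mul_add], ?_⟩
  rintro _ ⟨u, rfl⟩ _ ⟨v, rfl⟩
  show p * ρ ((p * u) * (p * v)) = p * ρ (p * u) * (p * v) + p * u * (p * ρ (p * v))
  rw [mul_mul_mul_eq_mul_of_central_idem hp hc, hρ.mul_map_mul_left hp hc, hρ.mul_map_mul_left hp hc,
    hρ.mul_map_mul_left hp hc, mul_mul_mul_eq_mul_of_central_idem hp hc,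
    mul_mul_mul_eq_mul_of_central_idem hp hc, hρ.2, mul_add]

lemma IsLocalDeriv.mul_map_mul_left {δ : R → R} (hδ : IsLocalDeriv δ) (hp : p * p = p)
    (hc : ∀ r : R, p * r = r * p) (x : R) : p * δ (p * x) = p * δ x := by
  obtain ⟨ρ, hρ, hδx⟩ := hδ.2 (x - p * x)
  have hsplit : δ x = δ (p * x) + δ (x - p * x) := by rw [← hδ.1, add_sub_cancel]
  rw [hsplit, mul_add, hδx, hρ.mul_map_sub_mul_eq_zero hp hc, add_zero]

lemma IsLocalDeriv.isLocalDerivOn_corner {δ : R → R} (hδ : IsLocalDeriv δ) (hp : p * p = p)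
    (hc : ∀ r : R, p * r = r * p) : IsLocalDerivOn (corner p) (fun y => p * δ y) := by
  refine ⟨fun x _ => ⟨δ x, rfl⟩, fun x _ y _ => by simp only [hδ.1, mul_add], fun x _ => ?_⟩
  obtain ⟨ρ, hρ, hδx⟩ := hδ.2 x
  exact ⟨fun y => p * ρ y, hρ.isDerivOn_corner hp hc, congrArg (p * ·) hδx⟩

lemma IsLocalDeriv.mul_map_mul_of_isDerivOn_corner {δ : R → R} (hδ : IsLocalDeriv δ)
    (hp : p * p = p) (hc : ∀ r : R, p * r = r * p)
    (hcorner : IsDerivOn (corner p) (fun y => p * δ y)) (a b : R) :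
    p * δ (a * b) = p * (δ a * b + a * δ b) := by
  have h := hcorner.2.2 (p * a) ⟨a, rfl⟩ (p * b) ⟨b, rfl⟩
  simp only [mul_mul_mul_eq_mul_of_central_idem hp hc, hδ.mul_map_mul_left hp hc] at h
  rw [h, mul_add]

end CentralIdempotent

theorem local_deriv_is_deriv_of_separating_family {R : Type*} [Ring R] (P : Set R)
    (hidem : ∀ p ∈ P, p * p = p) (hcent : ∀ p ∈ P, ∀ r : R, p * r = r * p)
    (hsep : ∀ x : R, x ≠ 0 → ∃ p ∈ P, p * x ≠ 0)
    (hcorner : ∀ p ∈ P, ∀ δ' : R → R, IsLocalDerivOn (corner p) δ' → IsDerivOn (corner p) δ')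
    (δ : R → R) (hδ : IsLocalDeriv δ) : IsDeriv δ := by
  refine ⟨hδ.1, fun a b => ?_⟩
  by_contra hne
  obtain ⟨p, hp, hpx⟩ := hsep _ (sub_ne_zero.mpr hne)
  have hpδ := hδ.mul_map_mul_of_isDerivOn_corner (hidem p hp) (hcent p hp)
    (hcorner p hp _ (hδ.isLocalDerivOn_corner (hidem p hp) (hcent p hp))) a b
  exact hpx (by rw [mul_sub, hpδ, sub_self])
end

section
/- Let R be a ring with identity, p a central idempotent, δ : R → R a local derivation whose restriction to pR is a derivation of pR. Then for all a, b ∈ R, p·(δ(ab) − aδ(b) − δ(a)b) = 0. -/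
/-! The complementary idempotent `q = 1 - p` is killed on the left by `p`, and so is the value of
any derivation on `qR`: from `qz = q(qz)` the Leibniz rule gives `ρ(qz) = ρ(q)·qz + q·ρ(qz)`, and
both terms vanish after multiplying by the central `p`. Since `δ` agrees pointwise with derivations
and is additive, `p·δ(x) = p·δ(px) = δ(px)`, the last step because `δ` preserves `pR`. The Leibniz
rule of `δ` on `pR`, applied to `pab = (pa)(pb)`, then gives the claim. -/

section Corner

variable {R : Type*} [Ring R] {p : R}

theorem mul_mem_corner (p x : R) : p * x ∈ corner p := ⟨x, rfl⟩

theorem mul_eq_self_of_mul_mem_corner (hp : IsIdempotentElem p) {s : R} (hs : s ∈ corner p) :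
    p * s = s := by
  obtain ⟨r, rfl⟩ := hs
  rw [← mul_assoc, hp.eq]

theorem mul_mul_mul_of_central (hp : IsIdempotentElem p) (hc : ∀ r, Commute p r) (x y : R) :
    p * x * (p * y) = p * (x * y) := by
  rw [mul_assoc, ← mul_assoc x, ← (hc x).eq, ← mul_assoc, ← mul_assoc, hp.eq, mul_assoc]

end Corner

section Derivation

variable {R : Type*} [Ring R] {p q : R}

theorem IsDeriv.mul_apply_mul_eq_zero {ρ : R → R} (hρ : IsDeriv ρ) (hq : IsIdempotentElem q)
    (hpq : p * q = 0) (hcomm : Commute p (ρ q)) (z : R) : p * ρ (q * z) = 0 := by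
  have hleibniz : ρ (q * z) = ρ q * (q * z) + q * ρ (q * z) := by
    conv_lhs => rw [← hq.eq, mul_assoc]
    exact hρ.2 q (q * z)
  rw [hleibniz, mul_add, ← mul_assoc, hcomm.eq, mul_assoc, ← mul_assoc p q, hpq,
    ← mul_assoc p q, hpq]
  simp only [zero_mul, mul_zero, add_zero]

theorem IsLocalDeriv.mul_apply_eq_mul_apply_mul {δ : R → R} (hδ : IsLocalDeriv δ)
    (hp : IsIdempotentElem p) (hc : ∀ r, Commute p r) (x : R) :
    p * δ x = p * δ (p * x) := by
  have hpq : p * (1 - p) = 0 := by rw [mul_sub, mul_one, hp.eq, sub_self]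
  obtain ⟨ρ, hρ, hδρ⟩ := hδ.2 ((1 - p) * x)
  calc p * δ x = p * δ (p * x + (1 - p) * x) := by rw [sub_mul, one_mul, add_sub_cancel]
    _ = p * δ (p * x) + p * ρ ((1 - p) * x) := by rw [hδ.1, mul_add, hδρ]
    _ = p * δ (p * x) := by
      rw [hρ.mul_apply_mul_eq_zero hp.one_sub hpq (hc _), add_zero]

theorem IsLocalDeriv.mul_apply_eq_apply_mul {δ : R → R} (hδ : IsLocalDeriv δ)
    (hres : IsDerivOn (corner p) δ) (hp : IsIdempotentElem p) (hc : ∀ r, Commute p r) (x : R) :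
    p * δ x = δ (p * x) := by
  rw [hδ.mul_apply_eq_mul_apply_mul hp hc,
    mul_eq_self_of_mul_mem_corner hp (hres.1 _ (mul_mem_corner p x))]

end Derivation

theorem corner_leibniz {R : Type*} [Ring R] (p : R) (hp : p * p = p)
    (hc : ∀ r : R, p * r = r * p) (δ : R → R) (hδ : IsLocalDeriv δ)
    (hres : IsDerivOn (corner p) δ) :
    ∀ a b : R, p * (δ (a * b) - a * δ b - δ a * b) = 0 := by
  intro a b
  have hpush := hδ.mul_apply_eq_apply_mul hres hp hc
  have hmul := mul_mul_mul_of_central hp hc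
  have hleibniz : p * δ (a * b) = p * (δ a * b) + p * (a * δ b) := by
    calc p * δ (a * b) = δ (p * a * (p * b)) := by rw [hpush, hmul]
      _ = δ (p * a) * (p * b) + p * a * δ (p * b) :=
        hres.2.2 _ (mul_mem_corner p a) _ (mul_mem_corner p b)
      _ = p * (δ a * b) + p * (a * δ b) := by rw [← hpush, ← hpush, hmul, hmul]
  rw [mul_sub, mul_sub, hleibniz]
  abel
end

section
/- For any unital ring B and any integer n ≥ 2, the matrix ring M_n(B) is generated as a ring by its idempotent elements. -/
/-!
For `i ≠ j` the matrix `E i i + b • E i j` is idempotent, so every off-diagonal matrix unit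
`b • E i j` is a difference of two idempotents. A diagonal one factors through a third index
as `b • E i i = (b • E i k) * E k i`, and every matrix is a sum of matrix units.
-/

namespace Matrix

variable {ι B : Type*} [Fintype ι] [DecidableEq ι] [Ring B]

theorem isIdempotentElem_single_one_add_single {i j : ι} (hij : i ≠ j) (b : B) :
    IsIdempotentElem (single i i (1 : B) + single i j b) := by
  simp [IsIdempotentElem, add_mul, mul_add, single_mul_single_of_ne _ _ _ _ hij.symm]

theorem single_mem_closure_isIdempotentElem_of_ne {i j : ι} (hij : i ≠ j) (b : B) :
    single i j b ∈ Subring.closure {e : Matrix ι ι B | IsIdempotentElem e} := by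
  have hdiag : single i i (1 : B) ∈ Subring.closure {e : Matrix ι ι B | IsIdempotentElem e} :=
    Subring.subset_closure (by simp [IsIdempotentElem])
  have hsum : single i i 1 + single i j b ∈
      Subring.closure {e : Matrix ι ι B | IsIdempotentElem e} :=
    Subring.subset_closure (isIdempotentElem_single_one_add_single hij b)
  simpa using Subring.sub_mem _ hsum hdiag

theorem single_mem_closure_isIdempotentElem [Nontrivial ι] (i j : ι) (b : B) :
    single i j b ∈ Subring.closure {e : Matrix ι ι B | IsIdempotentElem e} := by
  rcases eq_or_ne i j with rfl | hij
  · obtain ⟨k, hki⟩ := exists_ne i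
    have hfactor : single i i b = single i k b * single k i (1 : B) := by simp
    rw [hfactor]
    exact Subring.mul_mem _ (single_mem_closure_isIdempotentElem_of_ne hki.symm b)
      (single_mem_closure_isIdempotentElem_of_ne hki 1)
  · exact single_mem_closure_isIdempotentElem_of_ne hij b

theorem closure_isIdempotentElem_eq_top [Nontrivial ι] :
    Subring.closure {e : Matrix ι ι B | IsIdempotentElem e} = ⊤ := by
  refine eq_top_iff.mpr fun M _ => ?_
  rw [matrix_eq_sum_single M]
  exact Subring.sum_mem _ fun i _ => Subring.sum_mem _ fun j _ =>
    single_mem_closure_isIdempotentElem i j (M i j)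

end Matrix

theorem matrix_ring_generated_by_idempotents (B : Type*) [Ring B] (n : ℕ) (hn : 2 ≤ n) :
    Subring.closure {e : Matrix (Fin n) (Fin n) B | e * e = e} = ⊤ := by
  have : Nontrivial (Fin n) := Fin.nontrivial_iff_two_le.mpr hn
  exact Matrix.closure_isIdempotentElem_eq_top
end

section
/- If R is a ring with identity and p, q are central idempotents with pq = 0, then for any local derivation δ on R and any a, b ∈ R: δ((p+q)a) = δ(pa) + δ(qa), and p·δ(qa) = 0. -/
section

variable {R : Type*} [Ring R] {ρ δ : R → R} {p q : R}

theorem IsDeriv.apply_idempotent_mul (hρ : IsDeriv ρ) (hq : q * q = q) (a : R) :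
    ρ (q * a) = ρ q * (q * a) + q * ρ (q * a) := by
  have hqa : q * (q * a) = q * a := by rw [← mul_assoc, hq]
  rw [← hρ.2, hqa]

theorem IsDeriv.mul_apply_orthogonal_idempotent_mul (hρ : IsDeriv ρ) (hq : q * q = q)
    (hpc : ∀ r : R, p * r = r * p) (hpq : p * q = 0) (a : R) : p * ρ (q * a) = 0 := by
  rw [hρ.apply_idempotent_mul hq, mul_add, ← mul_assoc, hpc, mul_assoc, ← mul_assoc p q,
    ← mul_assoc p q, hpq, zero_mul, zero_mul, mul_zero, add_zero]

theorem IsLocalDeriv.mul_apply_orthogonal_idempotent_mul (hδ : IsLocalDeriv δ) (hq : q * q = q)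
    (hpc : ∀ r : R, p * r = r * p) (hpq : p * q = 0) (a : R) : p * δ (q * a) = 0 := by
  obtain ⟨ρ, hρ, hδρ⟩ := hδ.2 (q * a)
  rw [hδρ, hρ.mul_apply_orthogonal_idempotent_mul hq hpc hpq]

end

theorem local_deriv_orthogonal_central_idempotents_general {R : Type*} [Ring R] (p q : R)
    (hq : q * q = q) (hpc : ∀ r : R, p * r = r * p)
    (hpq : p * q = 0)
    (δ : R → R) (hδ : IsLocalDeriv δ) :
    ∀ a : R, δ ((p + q) * a) = δ (p * a) + δ (q * a) ∧ p * δ (q * a) = 0 := fun a =>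
  ⟨by rw [add_mul, hδ.1], hδ.mul_apply_orthogonal_idempotent_mul hq hpc hpq a⟩

theorem local_deriv_orthogonal_central_idempotents {R : Type*} [Ring R] (p q : R)
    (hp : p * p = p) (hq : q * q = q) (hpc : ∀ r : R, p * r = r * p)
    (hqc : ∀ r : R, q * r = r * q) (hpq : p * q = 0)
    (δ : R → R) (hδ : IsLocalDeriv δ) :
    ∀ a : R, δ ((p + q) * a) = δ (p * a) + δ (q * a) ∧ p * δ (q * a) = 0 :=
  local_deriv_orthogonal_central_idempotents_general p q hq hpc hpq δ hδ
end
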